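/- Let A be a Poisson algebra over a field k. Assume that for every prime Poisson ideal P of A there exist a finite subset Σ ⊆ P and an element s ∈ A \ P such that P = {Σ} : s, where {Σ} denotes the smallest radical Poisson ideal of A containing Σ and {Σ} : s = {r ∈ A : rs ∈ {Σ}}. Then A satisfies the ACC on radical Poisson ideals. -/

import Mathlib

/-- `B` is a Poisson bracket on the commutative `k`-algebra `A`: it is `k`-bilinear
(additivity and `k`-homogeneity in the first argument, together with antisymmetry, give
bilinearity), antisymmetric, satisfies the Jacobi identity, and is a derivation in each
argument. -/
def IsPoissonBracket (k : Type*) {A : Type*} [CommRing k] [CommRing A] [Algebra k A]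
    (B : A → A → A) : Prop :=
  (∀ a b c : A, B (a + b) c = B a c + B b c) ∧
  (∀ (r : k) (a b : A), B (r • a) b = r • B a b) ∧
  (∀ a b : A, B a b = - B b a) ∧
  (∀ a b c : A, B a (B b c) + B b (B c a) + B c (B a b) = 0) ∧
  (∀ a b c : A, B a (b * c) = B a b * c + b * B a c)

/-- An ideal `I` is a Poisson ideal for the bracket `B` if `{A, I} ⊆ I`. -/
def IsPoissonIdeal {A : Type*} [CommRing A] (B : A → A → A) (I : Ideal A) : Prop :=
  ∀ x : A, ∀ y ∈ I, B x y ∈ I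

/-- `A` satisfies the ascending chain condition on radical Poisson ideals. -/
def PoissonRadicalACC {A : Type*} [CommRing A] (B : A → A → A) : Prop :=
  ∀ c : ℕ → Ideal A, (∀ n, IsPoissonIdeal B (c n)) → (∀ n, (c n).IsRadical) →
    Monotone c → ∃ N, ∀ n, N ≤ n → c n = c N

/-- The division ideal `I : s = {r ∈ A | r * s ∈ I}`. -/
def idealDiv {A : Type*} [CommRing A] (I : Ideal A) (s : A) : Ideal A where
  carrier := {r : A | r * s ∈ I}
  zero_mem' := by simp
  add_mem' := by
    intro a b ha hb
    simpa [add_mul] using I.add_mem ha hb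
  smul_mem' := by
    intro c a ha
    simp only [Set.mem_setOf_eq, smul_eq_mul] at *
    rw [mul_assoc]
    exact I.mul_mem_left c ha

/-- The smallest radical Poisson ideal containing a subset `S` of `A`. -/
def radPoissonGen {A : Type*} [CommRing A] (B : A → A → A) (S : Set A) : Ideal A :=
  sInf {I : Ideal A | IsPoissonIdeal B I ∧ I.IsRadical ∧ S ⊆ (I : Set A)}

/-! The colon ideal `J : a` of a radical Poisson ideal `J` is again a radical Poisson ideal, since
the bracket is a derivation; this gives `{S} ∩ {T} = {S T}`. The ACC amounts to every radical
Poisson ideal being `{F}` for a finite `F`. If one is not, Zorn's lemma yields a maximal such `P`.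
It is prime: if `ab ∈ P` with `a, b ∉ P`, then `{P, a} = {Fa}` and `{P, b} = {Fb}` by maximality,
so `P = {P, a} ∩ {P, b} = {Fa Fb}`. Writing `P = {Σ} : s`, maximality gives `{P, s} = {F, s}`
with `F ⊆ P` finite, and then `P = P ∩ {F, s} = {P F, P s} ⊆ {Σ ∪ F}`, a contradiction. -/

open Pointwise

section Division

variable {A : Type*} [CommRing A]

theorem mem_idealDiv {I : Ideal A} {s r : A} : r ∈ idealDiv I s ↔ r * s ∈ I := Iff.rfl

theorem Ideal.IsRadical.idealDiv {I : Ideal A} (hR : I.IsRadical) (s : A) :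
    (idealDiv I s).IsRadical := by
  rintro r ⟨n, hn⟩
  rw [mem_idealDiv] at hn ⊢
  refine hR ⟨n + 1, ?_⟩
  have : (r * s) ^ (n + 1) = (r ^ n * s) * (r * s ^ n) := by ring
  exact this ▸ I.mul_mem_right _ hn

variable {B : A → A → A} (hd : ∀ a b c : A, B a (b * c) = B a b * c + b * B a c)
include hd

/-- The identity `(a{x,b})² = a{x,b} · {x,ab} - ab · {x,a}{x,b}` puts `(a{x,b})²` in `I`. -/
theorem IsPoissonIdeal.mul_bracket_mem {I : Ideal A} (hP : IsPoissonIdeal B I)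
    (hR : I.IsRadical) {a b : A} (hab : a * b ∈ I) (x : A) : a * B x b ∈ I := by
  have hsq : (a * B x b) ^ 2 = a * B x b * B x (a * b) - a * b * (B x a * B x b) := by
    rw [hd]; ring
  exact hR ⟨2, hsq ▸ I.sub_mem (I.mul_mem_left _ (hP x _ hab)) (I.mul_mem_right _ hab)⟩

theorem IsPoissonIdeal.idealDiv {I : Ideal A} (hP : IsPoissonIdeal B I) (hR : I.IsRadical)
    (s : A) : IsPoissonIdeal B (idealDiv I s) := by
  intro x y hy
  rw [mem_idealDiv, mul_comm] at hy ⊢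
  exact hP.mul_bracket_mem hd hR hy x

end Division

section RadPoissonGen

variable {A : Type*} [CommRing A] {B : A → A → A}

theorem isPoissonIdeal_radPoissonGen (S : Set A) : IsPoissonIdeal B (radPoissonGen B S) := by
  intro x y hy
  simp only [radPoissonGen, Ideal.mem_sInf] at hy ⊢
  exact fun I hI => hI.1 x y (hy hI)

theorem isRadical_radPoissonGen (S : Set A) : (radPoissonGen B S).IsRadical := by
  rintro r ⟨n, hn⟩
  simp only [radPoissonGen, Ideal.mem_sInf] at hn ⊢
  exact fun I hI => hI.2.1 ⟨n, hn hI⟩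

theorem subset_radPoissonGen (S : Set A) : S ⊆ radPoissonGen B S := by
  intro t ht
  simp only [SetLike.mem_coe, radPoissonGen, Ideal.mem_sInf]
  exact fun I hI => hI.2.2 ht

theorem radPoissonGen_le {S : Set A} {I : Ideal A} (hP : IsPoissonIdeal B I)
    (hR : I.IsRadical) (hS : S ⊆ I) : radPoissonGen B S ≤ I :=
  sInf_le ⟨hP, hR, hS⟩

theorem radPoissonGen_mono {S T : Set A} (h : S ⊆ T) : radPoissonGen B S ≤ radPoissonGen B T :=
  radPoissonGen_le (isPoissonIdeal_radPoissonGen T) (isRadical_radPoissonGen T)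
    (h.trans (subset_radPoissonGen T))

theorem radPoissonGen_eq_self {I : Ideal A} (hP : IsPoissonIdeal B I) (hR : I.IsRadical) :
    radPoissonGen B I = I :=
  le_antisymm (radPoissonGen_le hP hR subset_rfl) (subset_radPoissonGen _)

theorem radPoissonGen_inf (hd : ∀ a b c : A, B a (b * c) = B a b * c + b * B a c)
    (S T : Set A) : radPoissonGen B S ⊓ radPoissonGen B T = radPoissonGen B (S * T) := by
  set J := radPoissonGen B (S * T)
  have hJP : IsPoissonIdeal B J := isPoissonIdeal_radPoissonGen _
  have hJR : J.IsRadical := isRadical_radPoissonGen _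
  refine le_antisymm ?_ (le_inf ?_ ?_)
  · rintro x ⟨hxS, hxT⟩
    have hSx : ∀ s ∈ S, s ∈ (idealDiv J x : Set A) := fun s hs => by
      rw [SetLike.mem_coe, mem_idealDiv, mul_comm]
      refine radPoissonGen_le (hJP.idealDiv hd hJR s) (hJR.idealDiv s) (fun t ht => ?_) hxT
      rw [SetLike.mem_coe, mem_idealDiv, mul_comm]
      exact subset_radPoissonGen _ (Set.mul_mem_mul hs ht)
    have hxx : x * x ∈ J :=
      radPoissonGen_le (hJP.idealDiv hd hJR x) (hJR.idealDiv x) hSx hxS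
    exact hJR ⟨2, by rwa [pow_two]⟩
  · refine radPoissonGen_le (isPoissonIdeal_radPoissonGen S) (isRadical_radPoissonGen S) ?_
    rintro _ ⟨s, hs, t, -, rfl⟩
    exact Ideal.mul_mem_right _ _ (subset_radPoissonGen S hs)
  · refine radPoissonGen_le (isPoissonIdeal_radPoissonGen T) (isRadical_radPoissonGen T) ?_
    rintro _ ⟨s, -, t, ht, rfl⟩
    exact Ideal.mul_mem_left _ _ (subset_radPoissonGen T ht)

def IsRadPoissonFG (B : A → A → A) (I : Ideal A) : Prop :=
  ∃ F : Finset A, I = radPoissonGen B F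

end RadPoissonGen

section Directed

variable {A : Type*} [CommRing A] {B : A → A → A} {s : Set (Ideal A)}

theorem isPoissonIdeal_sSup_of_directedOn (hne : s.Nonempty) (hdir : DirectedOn (· ≤ ·) s)
    (h : ∀ I ∈ s, IsPoissonIdeal B I) : IsPoissonIdeal B (sSup s) := by
  intro x y hy
  rw [Submodule.mem_sSup_of_directed hne hdir] at hy ⊢
  obtain ⟨I, hI, hyI⟩ := hy
  exact ⟨I, hI, h I hI x y hyI⟩

theorem isRadical_sSup_of_directedOn (hne : s.Nonempty) (hdir : DirectedOn (· ≤ ·) s)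
    (h : ∀ I ∈ s, I.IsRadical) : (sSup s).IsRadical := by
  rintro r ⟨n, hn⟩
  rw [Submodule.mem_sSup_of_directed hne hdir] at hn ⊢
  obtain ⟨I, hI, hnI⟩ := hn
  exact ⟨I, hI, h I hI ⟨n, hnI⟩⟩

theorem IsRadPoissonFG.exists_mem_eq_sSup (hfg : IsRadPoissonFG B (sSup s))
    (hne : s.Nonempty) (hdir : DirectedOn (· ≤ ·) s)
    (h : ∀ I ∈ s, IsPoissonIdeal B I ∧ I.IsRadical) : ∃ I ∈ s, I = sSup s := by
  obtain ⟨F, hF⟩ := hfg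
  obtain ⟨I, hI, hFI⟩ :=
    (CompleteLattice.isCompactElement_iff_le_of_directed_sSup_le (α := Ideal A) _).1
      (Submodule.finset_span_isCompactElement F) s hne hdir
      (Ideal.span_le.2 (hF ▸ subset_radPoissonGen _))
  refine ⟨I, hI, le_antisymm (le_sSup hI) ?_⟩
  rw [hF]
  exact radPoissonGen_le (h I hI).1 (h I hI).2 (Ideal.span_le.1 hFI)

theorem poissonRadicalACC_of_forall_isRadPoissonFG
    (h : ∀ I : Ideal A, IsPoissonIdeal B I → I.IsRadical → IsRadPoissonFG B I) :
    PoissonRadicalACC B := by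
  intro c hcP hcR hmono
  have hne : (Set.range c).Nonempty := Set.range_nonempty c
  have hdir : DirectedOn (· ≤ ·) (Set.range c) := hmono.directed_le.directedOn_range
  have hc : ∀ I ∈ Set.range c, IsPoissonIdeal B I ∧ I.IsRadical := by
    rintro _ ⟨n, rfl⟩
    exact ⟨hcP n, hcR n⟩
  have hfg := h _ (isPoissonIdeal_sSup_of_directedOn hne hdir fun I hI => (hc I hI).1)
    (isRadical_sSup_of_directedOn hne hdir fun I hI => (hc I hI).2)
  obtain ⟨_, ⟨N, rfl⟩, hN⟩ := hfg.exists_mem_eq_sSup hne hdir hc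
  exact ⟨N, fun n hn => le_antisymm (hN ▸ le_sSup ⟨n, rfl⟩) (hmono hn)⟩

end Directed

section FiniteGeneration

variable {A : Type*} [CommRing A] {B : A → A → A}

theorem IsRadPoissonFG.exists_finset_subset {S : Set A}
    (hfg : IsRadPoissonFG B (radPoissonGen B S)) :
    ∃ F : Finset A, ↑F ⊆ S ∧ radPoissonGen B S = radPoissonGen B F := by
  classical
  set s := {I | ∃ F : Finset A, ↑F ⊆ S ∧ I = radPoissonGen B F}
  have hne : s.Nonempty := ⟨_, ∅, by simp, rfl⟩
  have hdir : DirectedOn (· ≤ ·) s := by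
    rintro _ ⟨F, hF, rfl⟩ _ ⟨G, hG, rfl⟩
    refine ⟨_, ⟨F ∪ G, by simpa using ⟨hF, hG⟩, rfl⟩, ?_, ?_⟩ <;>
      exact radPoissonGen_mono (by simp)
  have hs : ∀ I ∈ s, IsPoissonIdeal B I ∧ I.IsRadical := by
    rintro _ ⟨F, -, rfl⟩
    exact ⟨isPoissonIdeal_radPoissonGen _, isRadical_radPoissonGen _⟩
  have hS : radPoissonGen B S = sSup s := by
    refine le_antisymm (radPoissonGen_le ?_ ?_ fun t ht => ?_) (sSup_le ?_)
    · exact isPoissonIdeal_sSup_of_directedOn hne hdir fun I hI => (hs I hI).1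
    · exact isRadical_sSup_of_directedOn hne hdir fun I hI => (hs I hI).2
    · have ht' : t ∈ radPoissonGen B ({t} : Finset A) := subset_radPoissonGen _ (by simp)
      exact le_sSup (show _ ∈ s from ⟨{t}, by simpa using ht, rfl⟩) ht'
    · rintro _ ⟨F, hF, rfl⟩
      exact radPoissonGen_mono hF
  rw [hS] at hfg
  obtain ⟨_, ⟨F, hF, rfl⟩, hFeq⟩ := hfg.exists_mem_eq_sSup hne hdir hs
  exact ⟨F, hF, hS.trans hFeq.symm⟩

def nonFGRadPoissonIdeals (B : A → A → A) : Set (Ideal A) :=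
  {I | IsPoissonIdeal B I ∧ I.IsRadical ∧ ¬IsRadPoissonFG B I}

theorem IsChain.sSup_mem_nonFGRadPoissonIdeals {c : Set (Ideal A)}
    (hc : c ⊆ nonFGRadPoissonIdeals B) (hchain : IsChain (· ≤ ·) c) (hne : c.Nonempty) :
    sSup c ∈ nonFGRadPoissonIdeals B := by
  have hdir := hchain.directedOn
  refine ⟨isPoissonIdeal_sSup_of_directedOn hne hdir fun I hI => (hc hI).1,
    isRadical_sSup_of_directedOn hne hdir fun I hI => (hc hI).2.1, fun hfg => ?_⟩
  obtain ⟨I, hI, hIeq⟩ := hfg.exists_mem_eq_sSup hne hdir fun I hI => ⟨(hc hI).1, (hc hI).2.1⟩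
  exact (hc hI).2.2 (hIeq ▸ hfg)

theorem isRadPoissonFG_radPoissonGen_insert_of_maximal {P : Ideal A}
    (hP : Maximal (· ∈ nonFGRadPoissonIdeals B) P) {t : A} (ht : t ∉ P) :
    IsRadPoissonFG B (radPoissonGen B (insert t P)) := by
  by_contra hfg
  exact ht (hP.2 ⟨isPoissonIdeal_radPoissonGen _, isRadical_radPoissonGen _, hfg⟩
    (fun p hp => subset_radPoissonGen _ (Set.mem_insert_of_mem t hp))
    (subset_radPoissonGen _ (Set.mem_insert t _)))

variable (hd : ∀ a b c : A, B a (b * c) = B a b * c + b * B a c)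
include hd

theorem isPrime_of_maximal_nonFGRadPoissonIdeals {P : Ideal A}
    (hP : Maximal (· ∈ nonFGRadPoissonIdeals B) P) : P.IsPrime := by
  classical
  obtain ⟨hPP, hPR, hPfg⟩ := hP.1
  refine ⟨fun htop => hPfg ⟨{1}, ?_⟩, fun {a b} hab => ?_⟩
  · rw [htop, eq_comm, Ideal.eq_top_iff_one]
    exact subset_radPoissonGen _ (by simp)
  by_contra! hnot
  obtain ⟨ha, hb⟩ := hnot
  obtain ⟨Fa, hFa⟩ := isRadPoissonFG_radPoissonGen_insert_of_maximal hP ha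
  obtain ⟨Fb, hFb⟩ := isRadPoissonFG_radPoissonGen_insert_of_maximal hP hb
  have hprod : insert a (P : Set A) * insert b (P : Set A) ⊆ P := by
    rintro _ ⟨x, hx, y, hy, rfl⟩
    rcases hx with rfl | hx
    · rcases hy with rfl | hy
      · exact hab
      · exact P.mul_mem_left _ hy
    · exact P.mul_mem_right _ hx
  have hP_eq : P = radPoissonGen B (insert a P) ⊓ radPoissonGen B (insert b P) := by
    refine le_antisymm (le_inf ?_ ?_) ?_
    · exact fun p hp => subset_radPoissonGen _ (Set.mem_insert_of_mem a hp)
    · exact fun p hp => subset_radPoissonGen _ (Set.mem_insert_of_mem b hp)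
    · rw [radPoissonGen_inf hd]
      exact radPoissonGen_le hPP hPR hprod
  refine hPfg ⟨Fa * Fb, ?_⟩
  rw [hP_eq, hFa, hFb, radPoissonGen_inf hd, Finset.coe_mul]

theorem isRadPoissonFG_of_eq_idealDiv {P : Ideal A} (hPP : IsPoissonIdeal B P)
    (hPR : P.IsRadical) {Fs : Finset A} (hFsP : (Fs : Set A) ⊆ P) {s : A}
    (hPdiv : P = idealDiv (radPoissonGen B Fs) s)
    (hfg : IsRadPoissonFG B (radPoissonGen B (insert s P))) : IsRadPoissonFG B P := by
  classical
  obtain ⟨F, hFsub, hF⟩ := hfg.exists_finset_subset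
  have hFP : ((F.erase s : Finset A) : Set A) ⊆ P := fun f hf => by
    rw [Finset.coe_erase] at hf
    exact (hFsub hf.1).resolve_left hf.2
  have hprod : (P : Set A) * F ⊆ radPoissonGen B (Fs ∪ F.erase s : Finset A) := by
    rintro _ ⟨p, hp, f, hf, rfl⟩
    by_cases hfs : f = s
    · rw [hPdiv, SetLike.mem_coe, mem_idealDiv, ← hfs] at hp
      exact radPoissonGen_mono (by simp) hp
    · exact Ideal.mul_mem_left _ _ (subset_radPoissonGen _ (by simp [hfs, hf]))
  refine ⟨Fs ∪ F.erase s, le_antisymm ?_ ?_⟩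
  · calc P = radPoissonGen B P ⊓ radPoissonGen B F := by
          rw [radPoissonGen_eq_self hPP hPR, eq_comm, inf_eq_left, ← hF]
          exact fun p hp => subset_radPoissonGen _ (Set.mem_insert_of_mem s hp)
      _ = radPoissonGen B (P * F) := radPoissonGen_inf hd _ _
      _ ≤ _ := radPoissonGen_le (isPoissonIdeal_radPoissonGen _) (isRadical_radPoissonGen _) hprod
  · refine radPoissonGen_le hPP hPR ?_
    rw [Finset.coe_union]
    exact Set.union_subset hFsP hFP

theorem isRadPoissonFG_of_forall_isPrime_eq_idealDiv
    (hyp : ∀ P : Ideal A, P.IsPrime → IsPoissonIdeal B P →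
      ∃ Fs : Finset A, (↑Fs : Set A) ⊆ (P : Set A) ∧
        ∃ s : A, s ∉ P ∧ P = idealDiv (radPoissonGen B (↑Fs : Set A)) s)
    {I : Ideal A} (hIP : IsPoissonIdeal B I) (hIR : I.IsRadical) : IsRadPoissonFG B I := by
  by_contra hfg
  obtain ⟨P, -, hP⟩ := zorn_le_nonempty₀ (nonFGRadPoissonIdeals B)
    (fun c hc hchain y hy => ⟨sSup c, hchain.sSup_mem_nonFGRadPoissonIdeals hc ⟨y, hy⟩,
      fun _ hz => le_sSup hz⟩) I ⟨hIP, hIR, hfg⟩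
  obtain ⟨hPP, hPR, hPfg⟩ := hP.1
  obtain ⟨Fs, hFsP, s, hsP, hPdiv⟩ := hyp P (isPrime_of_maximal_nonFGRadPoissonIdeals hd hP) hPP
  exact hPfg (isRadPoissonFG_of_eq_idealDiv hd hPP hPR hFsP hPdiv
    (isRadPoissonFG_radPoissonGen_insert_of_maximal hP hsP))

end FiniteGeneration

/-- Let `A` be a Poisson algebra over a field `k`. If every prime Poisson
ideal `P` of `A` is of the form `{Σ} : s` for some finite `Σ ⊆ P` and `s ∈ A \ P`, where
`{Σ}` is the smallest radical Poisson ideal containing `Σ`, then `A` satisfies the ACC on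
radical Poisson ideals. -/
theorem poissonRadicalACC_of_prime_div {k A : Type*} [Field k] [CommRing A] [Algebra k A]
    (B : A → A → A) (hB : IsPoissonBracket k B)
    (hyp : ∀ P : Ideal A, P.IsPrime → IsPoissonIdeal B P →
      ∃ Fs : Finset A, (↑Fs : Set A) ⊆ (P : Set A) ∧
        ∃ s : A, s ∉ P ∧ P = idealDiv (radPoissonGen B (↑Fs : Set A)) s) :
    PoissonRadicalACC B :=
  poissonRadicalACC_of_forall_isRadPoissonFG fun _ hIP hIR =>
    isRadPoissonFG_of_forall_isPrime_eq_idealDiv hB.2.2.2.2 hyp hIP hIR
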